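/- If C = C₁ - i·C₂ is a normal operator with C₁ and C₂ nonnegative self-adjoint operators, then the operator i·C is m-accretive, i.e., Re⟨iCu, u⟩ ≥ 0 for all u ∈ D(C) and Range(I + iC) = H. -/

import Mathlib

open LinearPMap MeasureTheory Filter Topology
open scoped ComplexInnerProductSpace

variable {H : Type*} [NormedAddCommGroup H] [InnerProductSpace ℂ H] [CompleteSpace H]

/-- `T = A ∘ B` as unbounded operators: the domain of `A ∘ B` is
`{u ∈ D(B) : B u ∈ D(A)}` and the values agree. -/
def CompEq (A B T : H →ₗ.[ℂ] H) : Prop :=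
  (∀ u : H, (∃ h1 : u ∈ B.domain, B ⟨u, h1⟩ ∈ A.domain) ↔ u ∈ T.domain) ∧
  ∀ (u : H) (h1 : u ∈ B.domain) (h2 : B ⟨u, h1⟩ ∈ A.domain) (h3 : u ∈ T.domain),
    A ⟨B ⟨u, h1⟩, h2⟩ = T ⟨u, h3⟩

/-- A densely defined closed operator is normal if `C C† = C† C`. -/
def IsNormalOp (C : H →ₗ.[ℂ] H) : Prop :=
  C.IsClosed ∧ Dense (C.domain : Set H) ∧
    ∃ T : H →ₗ.[ℂ] H, CompEq C.adjoint C T ∧ CompEq C C.adjoint T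

def IsNonnegOp (A : H →ₗ.[ℂ] H) : Prop :=
  ∀ u : A.domain, 0 ≤ (⟪A u, (u : H)⟫).re

def IsSelfAdjointOp (A : H →ₗ.[ℂ] H) : Prop := A.adjoint = A

/-- `R` is the (nonnegative selfadjoint) square root of `A`. -/
def IsSqrtOf (R A : H →ₗ.[ℂ] H) : Prop :=
  IsSelfAdjointOp R ∧ IsNonnegOp R ∧ CompEq R R A

/-- Sectorial (with vertex 0 and half-angle constant `M`) numerical range. -/
def IsSectorialOp (M : ℝ) (T : H →ₗ.[ℂ] H) : Prop :=
  ∀ u : T.domain, 0 ≤ (⟪T u, (u : H)⟫).re ∧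
    |(⟪T u, (u : H)⟫).im| ≤ M * (⟪T u, (u : H)⟫).re

def IsMAccretive (T : H →ₗ.[ℂ] H) : Prop :=
  (∀ u : T.domain, 0 ≤ (⟪T u, (u : H)⟫).re) ∧
    ∀ v : H, ∃ u : T.domain, (u : H) + T u = v

def IsMSectorialOp (M : ℝ) (T : H →ₗ.[ℂ] H) : Prop :=
  IsSectorialOp M T ∧ ∀ v : H, ∃ u : T.domain, (u : H) + T u = v

/-- `R` is the (m-accretive) square root of the m-sectorial operator `T`. -/
def IsSqrtMSect (R T : H →ₗ.[ℂ] H) : Prop := IsMAccretive R ∧ CompEq R R T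

section Aux

set_option linter.unusedSectionVars false

theorem pmap_congr {f g : H →ₗ.[ℂ] H} (h : f = g) (x : f.domain) :
    f x = g ⟨(x : H), h ▸ x.2⟩ := by subst h; rfl

/-- von Neumann: for closed densely defined `C`, every `w` is `x + C†(C x)`. -/
theorem vonNeumann (C : H →ₗ.[ℂ] H) (hclosed : C.IsClosed) (hdense : Dense (C.domain : Set H))
    (w : H) : ∃ (x : H) (hx : x ∈ C.domain) (hCx : C ⟨x, hx⟩ ∈ C.adjoint.domain),
      x + C.adjoint ⟨C ⟨x, hx⟩, hCx⟩ = w := by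
  classical
  set L := WithLp.linearEquiv 2 ℂ (H × H) with hL
  set K : Submodule ℂ (WithLp 2 (H × H)) := C.graph.comap L.toLinearMap with hK
  have hKclosed : IsClosed (K : Set (WithLp 2 (H × H))) := by
    have hcont : Continuous (⇑L) := (WithLp.prodContinuousLinearEquiv 2 ℂ H H).continuous
    have : (K : Set (WithLp 2 (H × H))) = ⇑L ⁻¹' (C.graph : Set (H × H)) := rfl
    rw [this]
    exact hclosed.preimage hcont
  haveI : CompleteSpace K := hKclosed.completeSpace_coe
  obtain ⟨y, hy, z, hz, hdecomp⟩ := K.exists_add_mem_mem_orthogonal (L.symm (w, 0))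
  have hyK : L y ∈ C.graph := hy
  rw [LinearPMap.mem_graph_iff] at hyK
  obtain ⟨u0, hu1, hu2⟩ := hyK
  set a := (L z).1 with ha
  set b := (L z).2 with hb
  have hLdecomp : (w, (0 : H)) = L y + L z := by
    rw [← _root_.map_add, ← hdecomp, LinearEquiv.apply_symm_apply]
  have hw1 : w = (u0 : H) + a := by
    have := congrArg Prod.fst hLdecomp
    simpa [hu1] using this
  have hw2 : (0 : H) = C u0 + b := by
    have := congrArg Prod.snd hLdecomp
    simpa [hu2] using this
  have horth : ∀ u : C.domain, ⟪(u : H), a⟫ + ⟪C u, b⟫ = 0 := by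
    intro u
    have hmem : L.symm ((u : H), C u) ∈ K := by
      show L (L.symm ((u : H), C u)) ∈ C.graph
      rw [LinearEquiv.apply_symm_apply]
      exact C.mem_graph u
    have h0 := (Submodule.mem_orthogonal K z).1 hz _ hmem
    rw [WithLp.prod_inner_apply] at h0
    exact h0
  have hbadj : ∀ u : C.domain, ⟪-a, (u : H)⟫ = ⟪b, C u⟫ := by
    intro u
    have := congrArg (starRingEnd ℂ) (horth u)
    simp only [_root_.map_add, inner_conj_symm, _root_.map_zero] at this
    rw [inner_neg_left]
    linear_combination -this
  have hbmem : b ∈ C.adjoint.domain :=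
    LinearPMap.mem_adjoint_domain_of_exists _ ⟨-a, hbadj⟩
  have hbval : C.adjoint ⟨b, hbmem⟩ = -a :=
    LinearPMap.adjoint_apply_eq hdense _ hbadj
  have hbeq : b = -C u0 := by rw [eq_neg_iff_add_eq_zero, add_comm]; exact hw2.symm
  have hCmem : C u0 ∈ C.adjoint.domain := by
    have : C u0 = -b := by rw [hbeq, neg_neg]
    rw [this]; exact neg_mem hbmem
  refine ⟨(u0 : H), u0.2, by simpa using hCmem, ?_⟩
  have hval : C.adjoint ⟨C u0, by simpa using hCmem⟩ = a := by
    have h1 : (⟨C u0, by simpa using hCmem⟩ : C.adjoint.domain) = -⟨b, hbmem⟩ := by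
      ext; simp [hbeq]
    rw [h1, LinearPMap.map_neg, hbval, neg_neg]
  have hfin : (u0 : H) + C.adjoint ⟨C u0, hCmem⟩ = w := by rw [hval]; exact hw1.symm
  exact hfin

theorem range_closed (C : H →ₗ.[ℂ] H) (hclosed : C.IsClosed)
    (f : C.domain →ₗ[ℂ] H) (hf : ∀ u : C.domain, f u = (u : H) + Complex.I • C u)
    (hlow : ∀ u : C.domain, ‖(u : H)‖ ≤ ‖f u‖) :
    IsClosed ((LinearMap.range f : Submodule ℂ H) : Set H) := by
  apply IsSeqClosed.isClosed
  intro xs w hxs hlim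
  choose us hus using fun n => LinearMap.mem_range.mp (hxs n)
  have hcauchy : CauchySeq (fun n => ((us n : H))) := by
    have h1 : CauchySeq xs := hlim.cauchySeq
    rw [Metric.cauchySeq_iff] at h1 ⊢
    intro ε hε
    obtain ⟨N, hN⟩ := h1 ε hε
    refine ⟨N, fun m hm n hn => ?_⟩
    have h2 := hlow (us m - us n)
    rw [_root_.map_sub, hus, hus] at h2
    have h3 : ((us m - us n : C.domain) : H) = (us m : H) - (us n : H) := rfl
    rw [h3] at h2
    calc dist ((us m : H)) ((us n : H)) = ‖(us m : H) - (us n : H)‖ := dist_eq_norm _ _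
      _ ≤ ‖xs m - xs n‖ := h2
      _ = dist (xs m) (xs n) := (dist_eq_norm _ _).symm
      _ < ε := hN m hm n hn
  obtain ⟨l, hl⟩ := cauchySeq_tendsto_of_complete hcauchy
  have hCval : ∀ n, C (us n) = (-Complex.I) • (xs n - (us n : H)) := by
    intro n
    have h4 : xs n = (us n : H) + Complex.I • C (us n) := by rw [← hus n, hf]
    rw [h4]
    rw [add_sub_cancel_left, smul_smul]
    rw [show -Complex.I * Complex.I = 1 by rw [neg_mul, Complex.I_mul_I, neg_neg], one_smul]
  have hCtend : Filter.Tendsto (fun n => C (us n)) Filter.atTop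
      (nhds ((-Complex.I) • (w - l))) := by
    simp_rw [hCval]
    exact ((hlim.sub hl).const_smul _)
  have hmemgraph : (l, (-Complex.I) • (w - l)) ∈ C.graph := by
    apply hclosed.mem_of_tendsto (hl.prodMk_nhds hCtend)
    exact Filter.Eventually.of_forall fun n => C.mem_graph (us n)
  rw [LinearPMap.mem_graph_iff] at hmemgraph
  obtain ⟨y, hy1, hy2⟩ := hmemgraph
  have : f y = w := by
    have hy1' : l = (y : H) := hy1.symm
    have hy2' : (-Complex.I) • (w - l) = C y := hy2.symm
    rw [hf, ← hy1', ← hy2']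
    rw [smul_smul, show Complex.I * -Complex.I = 1 by rw [mul_neg, Complex.I_mul_I, neg_neg],
      one_smul, add_sub_cancel]
  exact ⟨y, this⟩

end Aux

set_option maxHeartbeats 1000000 in
/-- If `C = C₁ - i C₂` is normal with `C₁, C₂` nonnegative selfadjoint,
then `i C` is m-accretive: `Re ⟪i C u, u⟫ ≥ 0` on `D(C)` and `I + i C` is surjective. -/
theorem stmt1 (C C₁ C₂ : H →ₗ.[ℂ] H)
    (h1 : IsSelfAdjointOp C₁) (h2 : IsSelfAdjointOp C₂)
    (hn1 : IsNonnegOp C₁) (hn2 : IsNonnegOp C₂)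
    (hC : IsNormalOp C) (hdec : C = C₁ + (-Complex.I) • C₂) :
    (∀ u : C.domain, 0 ≤ (⟪Complex.I • (C u), (u : H)⟫).re) ∧
      ∀ v : H, ∃ u : C.domain, (u : H) + Complex.I • (C u) = v := by
  obtain ⟨hclosed, hdense, T, hT1, hT2⟩ := hC
  have hdom : C.domain = C₁.domain ⊓ C₂.domain := by
    rw [hdec, LinearPMap.add_domain, LinearPMap.smul_domain]
  have hd1 : C.domain ≤ C₁.domain := hdom ▸ inf_le_left
  have hd2 : C.domain ≤ C₂.domain := hdom ▸ inf_le_right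
  have hdense1 : Dense (C₁.domain : Set H) := Dense.mono hd1 hdense
  have hdense2 : Dense (C₂.domain : Set H) := Dense.mono hd2 hdense
  have hF1 : C₁.IsFormalAdjoint C₁ := by
    have h := LinearPMap.adjoint_isFormalAdjoint hdense1 (T := C₁)
    rwa [h1] at h
  have hF2 : C₂.IsFormalAdjoint C₂ := by
    have h := LinearPMap.adjoint_isFormalAdjoint hdense2 (T := C₂)
    rwa [h2] at h
  have hadj := LinearPMap.adjoint_isFormalAdjoint hdense (T := C)
  have happ : ∀ z : C.domain, C z = C₁ ⟨z, hd1 z.2⟩ + (-Complex.I) • C₂ ⟨z, hd2 z.2⟩ := by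
    intro z
    rw [pmap_congr hdec z, LinearPMap.add_apply, LinearPMap.smul_apply]
  -- numerical range decomposition and accretivity
  have him1 : ∀ z : C.domain, (⟪C₁ ⟨z, hd1 z.2⟩, (z : H)⟫).im = 0 := by
    intro z
    have h2' : (starRingEnd ℂ) ⟪C₁ ⟨z, hd1 z.2⟩, ((z : H))⟫ = ⟪C₁ ⟨z, hd1 z.2⟩, ((z : H))⟫ := by
      rw [inner_conj_symm]
      exact (hF1 ⟨z, hd1 z.2⟩ ⟨z, hd1 z.2⟩).symm
    exact Complex.conj_eq_iff_im.mp h2'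
  have hacc : ∀ z : C.domain, 0 ≤ (⟪Complex.I • C z, (z : H)⟫).re := by
    intro z
    have hnum : ⟪Complex.I • C z, (z : H)⟫
        = -Complex.I * ⟪C₁ ⟨z, hd1 z.2⟩, (z : H)⟫ + ⟪C₂ ⟨z, hd2 z.2⟩, (z : H)⟫ := by
      rw [inner_smul_left, happ z, inner_add_left, inner_smul_left, Complex.conj_I,
        Complex.conj_neg_I]
      ring_nf
      rw [Complex.I_sq]
      ring
    rw [hnum]
    have hA := him1 z
    have hB : 0 ≤ (⟪C₂ ⟨z, hd2 z.2⟩, (z : H)⟫).re := hn2 ⟨z, hd2 z.2⟩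
    set A := ⟪C₁ ⟨z, hd1 z.2⟩, (z : H)⟫
    set B := ⟪C₂ ⟨z, hd2 z.2⟩, (z : H)⟫
    have : (-Complex.I * A + B).re = A.im + B.re := by simp [Complex.add_re, Complex.mul_re]
    rw [this, hA]
    linarith
  -- the operator u ↦ u + i C u
  set f : C.domain →ₗ[ℂ] H := C.domain.subtype + Complex.I • C.toFun with hfdef
  have hf : ∀ u : C.domain, f u = (u : H) + Complex.I • C u := fun u => rfl
  have hlow : ∀ u : C.domain, ‖(u : H)‖ ≤ ‖f u‖ := by
    intro u
    rcases eq_or_lt_of_le (norm_nonneg ((u : H))) with h0 | h0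
    · rw [← h0]; exact norm_nonneg _
    have e1 : ‖(u : H)‖ ^ 2 = (⟪(u : H), (u : H)⟫).re := (inner_self_eq_norm_sq (𝕜 := ℂ) _).symm
    have e2 : (⟪f u, (u : H)⟫).re = (⟪(u : H), (u : H)⟫).re + (⟪Complex.I • C u, (u : H)⟫).re := by
      rw [hf, inner_add_left, Complex.add_re]
    have e3 : (⟪f u, (u : H)⟫).re ≤ ‖⟪f u, (u : H)⟫‖ := by
      exact Complex.re_le_norm _
    have e4 : ‖⟪f u, (u : H)⟫‖ ≤ ‖f u‖ * ‖(u : H)‖ := norm_inner_le_norm _ _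
    have e5 := hacc u
    nlinarith
  -- orthogonal complement of the range is trivial
  have hperp : ∀ v, v ∈ (LinearMap.range f)ᗮ → v = 0 := by
    intro v hv
    have hv' := (Submodule.mem_orthogonal _ v).1 hv
    have hstar : ∀ u : C.domain, ⟪v, C u⟫ = Complex.I * ⟪v, (u : H)⟫ := by
      intro u
      have h0 : ⟪f u, v⟫ = 0 := hv' _ (LinearMap.mem_range_self f u)
      rw [hf, inner_add_left, inner_smul_left, Complex.conj_I] at h0
      have h1 := congrArg (starRingEnd ℂ) h0
      simp only [_root_.map_add, _root_.map_mul, _root_.map_zero, _root_.map_neg,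
        inner_conj_symm, Complex.conj_I] at h1
      -- h1 : ⟪v, ↑u⟫ + Complex.I * ⟪v, C u⟫ = 0  (roughly)
      have h2 : Complex.I * ⟪v, C u⟫ = -⟪v, (u : H)⟫ := by linear_combination h1
      have h3 : Complex.I * (Complex.I * ⟪v, (u : H)⟫) = -⟪v, (u : H)⟫ := by
        rw [← mul_assoc, Complex.I_mul_I]; ring
      exact mul_left_cancel₀ Complex.I_ne_zero (h2.trans h3.symm)
    have hinner_self : ∀ y : H, ⟪y, y⟫ = ((‖y‖ ^ 2 : ℝ) : ℂ) := fun y => by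
      rw [inner_self_eq_norm_sq_to_K]; norm_num
    obtain ⟨x, hx, hCx, hsum⟩ := vonNeumann C hclosed hdense v
    set Cx : H := C ⟨x, hx⟩ with hCxdef
    set w : H := C.adjoint ⟨Cx, hCx⟩ with hwdef
    have hvw : v = x + w := hsum.symm
    have hxT : x ∈ T.domain := (hT1.1 x).mp ⟨hx, hCx⟩
    obtain ⟨hxA, hCAx⟩ := (hT2.1 x).mpr hxT
    set Ax : H := C.adjoint ⟨x, hxA⟩ with hAxdef
    have hww : C ⟨Ax, hCAx⟩ = w :=
      (hT2.2 x hxA hCAx hxT).trans (hT1.2 x hx hCx hxT).symm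
    set S : ℂ := ((‖x‖ ^ 2 + ‖Cx‖ ^ 2 : ℝ) : ℂ) with hSdef
    have hconjS : (starRingEnd ℂ) S = S := by rw [hSdef]; exact Complex.conj_ofReal _
    have hwx : ⟪w, x⟫ = ⟪Cx, Cx⟫ := hadj ⟨Cx, hCx⟩ ⟨x, hx⟩
    have hvx : ⟪v, x⟫ = S := by
      rw [hvw, inner_add_left, hwx, hinner_self, hinner_self, hSdef]
      push_cast
      ring
    have hxv : ⟪(x : H), v⟫ = S := by
      have h := congrArg (starRingEnd ℂ) hvx
      rwa [inner_conj_symm, hconjS] at h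
    have hvCx : ⟪v, Cx⟫ = Complex.I * S := (hstar ⟨x, hx⟩).trans (by rw [hvx])
    have hCxv : ⟪Cx, v⟫ = -Complex.I * S := by
      have h := congrArg (starRingEnd ℂ) hvCx
      rwa [inner_conj_symm, _root_.map_mul, Complex.conj_I, hconjS] at h
    have hwvx : w = v - x := by rw [hvw, add_sub_cancel_left]
    have hwAx : ⟪w, Ax⟫ = -Complex.I * S - ⟪Cx, x⟫ := by
      have h := hadj ⟨Cx, hCx⟩ ⟨Ax, hCAx⟩
      rw [hww] at h
      rw [h, hwvx, inner_sub_right, hCxv]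
    have hAxx : ⟪Ax, x⟫ = ⟪(x : H), Cx⟫ := hadj ⟨x, hxA⟩ ⟨x, hx⟩
    have hxAx : ⟪(x : H), Ax⟫ = ⟪Cx, x⟫ := by
      have h := congrArg (starRingEnd ℂ) hAxx
      rwa [inner_conj_symm, inner_conj_symm] at h
    have hvAx : ⟪v, Ax⟫ = -Complex.I * S := by
      rw [hvw, inner_add_left, hxAx, hwAx]
      ring
    have hvw2 : ⟪v, w⟫ = S := by
      have h := hstar ⟨Ax, hCAx⟩
      rw [hww] at h
      rw [h, hvAx, ← mul_assoc, mul_neg, Complex.I_mul_I, neg_neg, one_mul]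
    have hwv : ⟪w, v⟫ = S := by
      have h := congrArg (starRingEnd ℂ) hvw2
      rwa [inner_conj_symm, hconjS] at h
    have hvv : ⟪v, v⟫ = 2 * S := by
      have h := congrArg (fun t => ⟪v, t⟫) hvw
      rw [h, inner_add_right, hvx, hvw2]
      ring
    have hwwInner : ⟪w, w⟫ = S - ⟪Cx, Cx⟫ := by
      have h := congrArg (fun t => ⟪w, t⟫) hwvx
      rw [h, inner_sub_right, hwv, hwx]
    have hnw : ‖w‖ ^ 2 = ‖x‖ ^ 2 := by
      have h : ((‖w‖ ^ 2 : ℝ) : ℂ) = ((‖x‖ ^ 2 : ℝ) : ℂ) := by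
        rw [← hinner_self w, hwwInner, hinner_self Cx, hSdef]
        push_cast
        ring
      exact_mod_cast h
    have hAxAx : ⟪Ax, Ax⟫ = S - ⟪(x : H), (x : H)⟫ := by
      have h := hadj ⟨x, hxA⟩ ⟨Ax, hCAx⟩
      rw [hww] at h
      rw [h, hwvx, inner_sub_right, hxv]
    have hnAx : ‖Ax‖ ^ 2 = ‖Cx‖ ^ 2 := by
      have h : ((‖Ax‖ ^ 2 : ℝ) : ℂ) = ((‖Cx‖ ^ 2 : ℝ) : ℂ) := by
        rw [← hinner_self Ax, hAxAx, hinner_self, hSdef]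
        push_cast
        ring
      exact_mod_cast h
    -- decomposition of C x and C† x into C₁, C₂ parts
    set C1x : H := C₁ ⟨x, hd1 hx⟩ with hC1xdef
    set C2x : H := C₂ ⟨x, hd2 hx⟩ with hC2xdef
    have hCxdec : Cx = C1x + (-Complex.I) • C2x := happ ⟨x, hx⟩
    have hAxdec : Ax = C1x + Complex.I • C2x := by
      have hx₀ : ∀ u : C.domain,
          ⟪C1x + Complex.I • C2x, (u : H)⟫ = ⟪x, C u⟫ := by
        intro u
        rw [happ u, inner_add_left, inner_smul_left, Complex.conj_I,
          inner_add_right, inner_smul_right]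
        rw [hC1xdef, hC2xdef, hF1 ⟨x, hd1 hx⟩ ⟨u, hd1 u.2⟩, hF2 ⟨x, hd2 hx⟩ ⟨u, hd2 u.2⟩]
      have hmem : x ∈ C.adjoint.domain :=
        LinearPMap.mem_adjoint_domain_of_exists _ ⟨_, hx₀⟩
      have hval : C.adjoint ⟨x, hmem⟩ = C1x + Complex.I • C2x :=
        LinearPMap.adjoint_apply_eq hdense _ hx₀
      rw [hAxdef]
      exact hval
    -- parallelogram: ‖C₂ x‖ ≤ ‖C x‖
    have hpar : ⟪Cx, Cx⟫ + ⟪Ax, Ax⟫ = 2 * ⟪C1x, C1x⟫ + 2 * ⟪C2x, C2x⟫ := by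
      rw [hCxdec, hAxdec]
      simp only [inner_add_left, inner_add_right, inner_smul_left, inner_smul_right,
        Complex.conj_I, Complex.conj_neg_I]
      ring_nf
      rw [Complex.I_sq]
      ring
    have hC2le : ‖C2x‖ ^ 2 ≤ ‖Cx‖ ^ 2 := by
      have h : ((2 * ‖Cx‖ ^ 2 : ℝ) : ℂ) = ((2 * ‖C1x‖ ^ 2 + 2 * ‖C2x‖ ^ 2 : ℝ) : ℂ) := by
        have h2 : ((‖Ax‖ ^ 2 : ℝ) : ℂ) = ((‖Cx‖ ^ 2 : ℝ) : ℂ) := by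
          exact_mod_cast congrArg (fun r : ℝ => (r : ℂ)) hnAx
        calc ((2 * ‖Cx‖ ^ 2 : ℝ) : ℂ) = ((‖Cx‖ ^ 2 : ℝ) : ℂ) + ((‖Ax‖ ^ 2 : ℝ) : ℂ) := by
              rw [h2]; push_cast; ring
          _ = ⟪Cx, Cx⟫ + ⟪Ax, Ax⟫ := by rw [hinner_self, hinner_self]
          _ = 2 * ⟪C1x, C1x⟫ + 2 * ⟪C2x, C2x⟫ := hpar
          _ = ((2 * ‖C1x‖ ^ 2 + 2 * ‖C2x‖ ^ 2 : ℝ) : ℂ) := by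
              rw [hinner_self, hinner_self]; push_cast; ring
      have h' : 2 * ‖Cx‖ ^ 2 = 2 * ‖C1x‖ ^ 2 + 2 * ‖C2x‖ ^ 2 := by exact_mod_cast h
      nlinarith [sq_nonneg ‖C1x‖]
    -- the key identity ⟪v, C₂x⟫ = -S
    have hAxCx : Ax - Cx = ((2 : ℂ) * Complex.I) • C2x := by
      rw [hAxdec, hCxdec, add_sub_add_left_eq_sub, ← sub_smul]
      congr 1
      ring
    have hvC2 : ⟪v, C2x⟫ = -S := by
      have hclaim : ((2 : ℂ) * Complex.I) * ⟪v, C2x⟫ = ((2 : ℂ) * Complex.I) * (-S) := by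
        rw [← inner_smul_right, ← hAxCx, inner_sub_right, hvAx, hvCx]
        ring
      exact mul_left_cancel₀ (mul_ne_zero two_ne_zero Complex.I_ne_zero) hclaim
    -- positivity of the C₂ form at x
    have hxC2re : 0 ≤ (⟪(x : H), C2x⟫).re := by
      have h := hn2 ⟨x, hd2 hx⟩
      have h2 : ⟪(x : H), C2x⟫ = (starRingEnd ℂ) ⟪C2x, (x : H)⟫ := (inner_conj_symm _ _).symm
      rw [h2, Complex.conj_re]
      exact h
    -- splitting and estimates
    have hsplit : (⟪(x : H), C2x⟫).re + (⟪w, C2x⟫).re = -(‖x‖ ^ 2 + ‖Cx‖ ^ 2) := by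
      have h : ⟪(x : H), C2x⟫ + ⟪w, C2x⟫ = -S := by
        rw [← inner_add_left, ← hvw, hvC2]
      have := congrArg Complex.re h
      rw [Complex.add_re] at this
      rw [this, hSdef]
      simp [← Complex.ofReal_pow]
    have hCS : |(⟪w, C2x⟫).re| ≤ ‖x‖ * ‖Cx‖ := by
      have c1 : |(⟪w, C2x⟫).re| ≤ ‖⟪w, C2x⟫‖ := by
        exact Complex.abs_re_le_norm _
      have c2 : ‖⟪w, C2x⟫‖ ≤ ‖w‖ * ‖C2x‖ := norm_inner_le_norm _ _
      have c3 : ‖w‖ = ‖x‖ := by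
        nlinarith [norm_nonneg w, norm_nonneg x, hnw]
      have c4 : ‖C2x‖ ≤ ‖Cx‖ := by
        nlinarith [norm_nonneg C2x, norm_nonneg Cx, hC2le]
      calc |(⟪w, C2x⟫).re| ≤ ‖w‖ * ‖C2x‖ := le_trans c1 c2
        _ = ‖x‖ * ‖C2x‖ := by rw [c3]
        _ ≤ ‖x‖ * ‖Cx‖ := mul_le_mul_of_nonneg_left c4 (norm_nonneg _)
    have hAM : ‖x‖ * ‖Cx‖ ≤ (‖x‖ ^ 2 + ‖Cx‖ ^ 2) / 2 := by
      nlinarith [sq_nonneg (‖x‖ - ‖Cx‖)]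
    have hzero : ‖x‖ ^ 2 + ‖Cx‖ ^ 2 ≤ 0 := by
      have hr := neg_abs_le ((⟪w, C2x⟫).re)
      linarith
    clear_value S C1x C2x Ax w Cx
    have hvnorm : ((‖v‖ ^ 2 : ℝ) : ℂ) = 2 * S := by rw [← hinner_self v]; exact hvv
    have hveq : ‖v‖ ^ 2 = 2 * (‖x‖ ^ 2 + ‖Cx‖ ^ 2) := by
      rw [hSdef] at hvnorm
      exact_mod_cast hvnorm
    have hv2 : ‖v‖ ^ 2 ≤ 0 := by linarith
    have hv25 : ‖v‖ ^ 2 = 0 := le_antisymm hv2 (sq_nonneg _)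
    have hv3 : ‖v‖ = 0 := (pow_eq_zero_iff (two_ne_zero)).mp hv25
    exact norm_eq_zero.mp hv3
  -- conclude surjectivity
  have hRclosed := range_closed C hclosed f hf hlow
  haveI : CompleteSpace (LinearMap.range f) := hRclosed.completeSpace_coe
  have htop : LinearMap.range f = ⊤ := by
    rw [← Submodule.orthogonal_eq_bot_iff, Submodule.eq_bot_iff]
    exact fun v hv => hperp v hv
  refine ⟨fun u => hacc u, fun v => ?_⟩
  have hvmem : v ∈ LinearMap.range f := htop ▸ Submodule.mem_top
  obtain ⟨u, hu⟩ := hvmem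
  exact ⟨u, by rw [← hf u]; exact hu⟩
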